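/- arXiv:2410.06793 — 2 statements merged into one kernel-verified Lean document; each statement's English description precedes it below -/
import Mathlib

section
/- Let G be a 3-connected graph, let C be a cycle in G, let r be a vertex not on C, and let P1, P2, P3 be three paths from r to C that pairwise intersect only in r and each meet C only in their other endpoint, with endpoints v1, v2, v3 on C. If there exist three pairwise disjoint arcs of C, each containing one of v1, v2, v3 and at least one vertex of a root set R ⊆ V(C) ∪ {r}, then G contains an R'-rooted K4-minor for some set R' of four roots (one from each arc together with r). -/
open SimpleGraph

/-- A `K₄`-minor of `G` with prescribed roots `a, b, c, d`. -/
def PrescribedK4 {V : Type*} (G : SimpleGraph V) (a b c d : V) : Prop :=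
  ∃ S : Fin 4 → Set V,
    (∀ i j, i ≠ j → Disjoint (S i) (S j)) ∧
    (∀ i, (G.induce (S i)).Connected) ∧
    a ∈ S 0 ∧ b ∈ S 1 ∧ c ∈ S 2 ∧ d ∈ S 3 ∧
    (∀ i j, i ≠ j → ∃ u ∈ S i, ∃ v ∈ S j, G.Adj u v)

/-- A graph is 3-connected if it has at least 4 vertices and removing any set of at
most 2 vertices leaves it connected. -/
def ThreeConnected {V : Type*} (G : SimpleGraph V) : Prop :=
  4 ≤ Nat.card V ∧ ∀ X : Set V, X.ncard ≤ 2 → (G.induce Xᶜ).Connected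


namespace FanK4Aux

variable {V : Type*} {G : SimpleGraph V}

/-- Walks inside a set give reachability in the induced graph. -/
lemma induce_reach {S : Set V} {u v : V} (W : G.Walk u v)
    (hW : ∀ x ∈ W.support, x ∈ S) (x y : ↥S) (hx : (x : V) = u) (hy : (y : V) = v) :
    (G.induce S).Reachable x y := by
  induction W generalizing x with
  | nil => exact (Subtype.ext (hx.trans hy.symm)) ▸ Reachable.refl x
  | @cons a b c h q ih =>
    have hb : b ∈ S := hW b (by simp)
    have hadj : (G.induce S).Adj x ⟨b, hb⟩ := by
      simp only [comap_adj, Function.Embedding.coe_subtype]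
      rw [hx]; exact h
    exact hadj.reachable.trans (ih (fun t ht => hW t (by simp [ht])) ⟨b, hb⟩ rfl hy)

/-- getVert is injective on `[0, length]` for a path. -/
lemma path_getVert_injOn {u v : V} (A : G.Walk u v) (hA : A.IsPath) :
    ∀ j ≤ A.length, ∀ k ≤ A.length, A.getVert j = A.getVert k → j = k := by
  induction A with
  | nil => intro j hj k hk _; simp only [Walk.length_nil, Nat.le_zero] at hj hk; omega
  | @cons a b c h q ih =>
    rw [Walk.cons_isPath_iff] at hA
    intro j hj k hk heq
    match j, k with
    | 0, 0 => rfl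
    | 0, k + 1 =>
      exfalso
      rw [Walk.getVert_zero, Walk.getVert_cons_succ] at heq
      exact hA.2 (Walk.mem_support_iff_exists_getVert.mpr ⟨k, heq.symm, by
        simpa [Walk.length_cons] using Nat.lt_succ_iff.mp (Nat.lt_of_lt_of_le (Nat.lt_succ_self k) hk)⟩)
    | j + 1, 0 =>
      exfalso
      rw [Walk.getVert_zero, Walk.getVert_cons_succ] at heq
      exact hA.2 (Walk.mem_support_iff_exists_getVert.mpr ⟨j, heq, by
        simpa [Walk.length_cons] using Nat.lt_succ_iff.mp (Nat.lt_of_lt_of_le (Nat.lt_succ_self j) hj)⟩)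
    | j + 1, k + 1 =>
      rw [Walk.getVert_cons_succ, Walk.getVert_cons_succ] at heq
      have := ih hA.1 j (by simpa [Walk.length_cons] using hj) k
        (by simpa [Walk.length_cons] using hk) heq
      omega

/-- getVert is injective on `[0, length)` for a cycle. -/
lemma cycle_getVert_injOn {x0 : V} (C : G.Walk x0 x0) (hC : C.IsCycle) :
    ∀ j < C.length, ∀ k < C.length, C.getVert j = C.getVert k → j = k := by
  cases C with
  | nil => simp at hC
  | @cons _ b _ h q =>
    rw [Walk.cons_isCycle_iff] at hC
    intro j hj k hk heq
    simp only [Walk.length_cons] at hj hk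
    match j, k with
    | 0, 0 => rfl
    | 0, k + 1 =>
      exfalso
      rw [Walk.getVert_zero, Walk.getVert_cons_succ] at heq
      have hkq : k = q.length := by
        have := q.getVert_length
        exact path_getVert_injOn q hC.1 k (by omega) q.length le_rfl (by rw [this, ← heq])
      omega
    | j + 1, 0 =>
      exfalso
      rw [Walk.getVert_zero, Walk.getVert_cons_succ] at heq
      have hjq : j = q.length := by
        have := q.getVert_length
        exact path_getVert_injOn q hC.1 j (by omega) q.length le_rfl (by rw [this, heq])
      omega
    | j + 1, k + 1 =>
      rw [Walk.getVert_cons_succ, Walk.getVert_cons_succ] at heq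
      have := path_getVert_injOn q hC.1 j (by omega) k (by omega) heq
      omega

/-- Every edge of a walk is between consecutive getVerts. -/
lemma edge_exists_getVert {u v : V} (p : G.Walk u v) {e : Sym2 V} (he : e ∈ p.edges) :
    ∃ k < p.length, e = s(p.getVert k, p.getVert (k + 1)) := by
  induction p with
  | nil => simp at he
  | @cons a b c h q ih =>
    rw [Walk.edges_cons, List.mem_cons] at he
    rcases he with he | he
    · exact ⟨0, by simp [Walk.length_cons], by
        rw [he, Walk.getVert_zero, Walk.getVert_cons_succ, Walk.getVert_zero]⟩
    · obtain ⟨k, hk, hek⟩ := ih he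
      exact ⟨k + 1, by simp [Walk.length_cons]; omega, by
        rw [Walk.getVert_cons_succ, Walk.getVert_cons_succ]; exact hek⟩

end FanK4Aux

namespace FanK4Aux

variable {V : Type*} {G : SimpleGraph V}

/-- The vertices of a cycle indexed by `ZMod C.length`. -/
def cg {x0 : V} (C : G.Walk x0 x0) (i : ZMod C.length) : V := C.getVert i.val

lemma cg_injective {x0 : V} (C : G.Walk x0 x0) (hC : C.IsCycle) :
    Function.Injective (cg C) := by
  haveI : NeZero C.length := ⟨by have := hC.three_le_length; omega⟩
  intro i j hij
  have := cycle_getVert_injOn C hC i.val i.val_lt j.val j.val_lt hij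
  have hi : ((i.val : ℕ) : ZMod C.length) = i := ZMod.natCast_rightInverse i
  have hj : ((j.val : ℕ) : ZMod C.length) = j := ZMod.natCast_rightInverse j
  rw [← hi, ← hj, this]

lemma cg_mem_support {x0 : V} (C : G.Walk x0 x0) (hC : C.IsCycle) (i : ZMod C.length) :
    cg C i ∈ C.support := by
  haveI : NeZero C.length := ⟨by have := hC.three_le_length; omega⟩
  exact Walk.mem_support_iff_exists_getVert.mpr ⟨i.val, rfl, i.val_lt.le⟩

lemma cg_natCast {x0 : V} (C : G.Walk x0 x0) (hC : C.IsCycle) (k : ℕ) (hk : k < C.length) :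
    cg C (k : ZMod C.length) = C.getVert k := by
  haveI : NeZero C.length := ⟨by have := hC.three_le_length; omega⟩
  unfold cg; rw [ZMod.val_natCast, Nat.mod_eq_of_lt hk]

lemma cg_natCast' {x0 : V} (C : G.Walk x0 x0) (hC : C.IsCycle) (k : ℕ) (hk : k ≤ C.length) :
    cg C (k : ZMod C.length) = C.getVert k := by
  haveI : NeZero C.length := ⟨by have := hC.three_le_length; omega⟩
  rcases Nat.lt_or_ge k C.length with h | h
  · exact cg_natCast C hC k h
  · have hk' : k = C.length := by omega
    unfold cg
    rw [ZMod.val_natCast, hk', Nat.mod_self, Walk.getVert_zero, Walk.getVert_length]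

lemma cg_adj {x0 : V} (C : G.Walk x0 x0) (hC : C.IsCycle) (i : ZMod C.length) :
    G.Adj (cg C i) (cg C (i + 1)) := by
  haveI : NeZero C.length := ⟨by have := hC.three_le_length; omega⟩
  have hv : i.val < C.length := i.val_lt
  have hi : ((i.val : ℕ) : ZMod C.length) = i := ZMod.natCast_rightInverse i
  have h2 : cg C (i + 1) = C.getVert (i.val + 1) := by
    have he : i + 1 = ((i.val + 1 : ℕ) : ZMod C.length) := by push_cast; rw [hi]
    rw [he, cg_natCast' C hC _ (by omega)]
  rw [h2]
  exact C.adj_getVert_succ hv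

lemma edge_consecutive {x0 : V} (C : G.Walk x0 x0) (hC : C.IsCycle) {u w : V}
    (he : s(u, w) ∈ C.edges) :
    ∃ t : ZMod C.length,
      (cg C t = u ∧ cg C (t + 1) = w) ∨ (cg C t = w ∧ cg C (t + 1) = u) := by
  haveI : NeZero C.length := ⟨by have := hC.three_le_length; omega⟩
  obtain ⟨k, hk, hek⟩ := edge_exists_getVert C he
  have h1 : cg C (k : ZMod C.length) = C.getVert k := cg_natCast C hC k hk
  have h2 : cg C ((k : ZMod C.length) + 1) = C.getVert (k + 1) := by
    have he' : (k : ZMod C.length) + 1 = ((k + 1 : ℕ) : ZMod C.length) := by push_cast; ring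
    rw [he', cg_natCast' C hC _ (by omega)]
  rw [Sym2.eq_iff] at hek
  rcases hek with ⟨hu, hw⟩ | ⟨hu, hw⟩
  · exact ⟨(k : ZMod C.length), Or.inl ⟨by rw [h1, hu], by rw [h2, hw]⟩⟩
  · exact ⟨(k : ZMod C.length), Or.inr ⟨by rw [h1, hw], by rw [h2, hu]⟩⟩

lemma reach_interval {n : ℕ} (g : ZMod n → V) (gadj : ∀ i, G.Adj (g i) (g (i + 1)))
    (S : Set V) (i : ZMod n) (m : ℕ) (hm : ∀ k : ℕ, k ≤ m → g (i + (k : ℕ)) ∈ S)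
    (x y : ↥S) (hx : (x : V) = g i) (hy : (y : V) = g (i + (m : ℕ))) :
    (G.induce S).Reachable x y := by
  induction m generalizing y with
  | zero =>
    have hxy : x = y := Subtype.ext (by rw [hx, hy]; norm_num)
    exact hxy ▸ Reachable.refl x
  | succ m ih =>
    have hy' : g (i + (m : ℕ)) ∈ S := hm m (Nat.le_succ m)
    have hr := ih (fun k hk => hm k (le_trans hk (Nat.le_succ m))) ⟨_, hy'⟩ rfl
    refine hr.trans (Adj.reachable ?_)
    simp only [comap_adj, Function.Embedding.coe_subtype]
    rw [hy]
    have hcast : i + ((m + 1 : ℕ) : ZMod n) = (i + (m : ℕ)) + 1 := by push_cast; ring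
    rw [hcast]
    exact gadj _

end FanK4Aux

namespace FanK4Aux
variable {V : Type*} {G : SimpleGraph V}

lemma arc_interval {x0 : V} (C : G.Walk x0 x0) (hC : C.IsCycle) :
    ∀ {a b : V} (A : G.Walk a b), A.IsPath → A.edges ⊆ C.edges → a ∈ C.support →
      ∃ s : ZMod C.length,
        (∀ x, x ∈ A.support ↔ ∃ k, k ≤ A.length ∧ x = cg C (s + (k : ℕ))) ∧
        ((cg C s = a ∧ cg C (s + (A.length : ℕ)) = b) ∨
         (cg C s = b ∧ cg C (s + (A.length : ℕ)) = a)) := by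
  haveI : NeZero C.length := ⟨by have := hC.three_le_length; omega⟩
  intro a b A
  induction A with
  | @nil a =>
    intro _ _ ha
    obtain ⟨i, hi, hile⟩ := Walk.mem_support_iff_exists_getVert.mp ha
    have hcg : cg C (i : ZMod C.length) = a := by rw [cg_natCast' C hC i hile, hi]
    refine ⟨(i : ZMod C.length), fun x => ?_, Or.inl ⟨hcg, by simpa using hcg⟩⟩
    simp only [Walk.support_nil, List.mem_singleton, Walk.length_nil]
    constructor
    · rintro rfl; exact ⟨0, le_rfl, by simpa using hcg.symm⟩
    · rintro ⟨k, hk, rfl⟩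
      have hk0 : k = 0 := by omega
      subst hk0; simpa using hcg
  | @cons u c w h A' ih =>
    intro hA hAe hmem
    have hcons := (Walk.cons_isPath_iff h A').mp hA
    have hce : A'.edges ⊆ C.edges := fun e he => hAe (by simp [he])
    have hhead : s(u, c) ∈ C.edges := hAe (by simp)
    have hcmem : c ∈ C.support := Walk.snd_mem_support_of_mem_edges C hhead
    obtain ⟨s', hsupp', hend'⟩ := ih hcons.1 hce hcmem
    obtain ⟨t, ht⟩ := edge_consecutive C hC hhead
    have hinj := cg_injective C hC
    simp only [Walk.support_cons, Walk.length_cons]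
    rcases hend' with ⟨h1, h2⟩ | ⟨h1, h2⟩
    · -- forward : cg s' = c, cg (s' + len) = w
      rcases ht with ⟨ht1, ht2⟩ | ⟨ht1, ht2⟩
      · -- cg t = u, cg (t+1) = c
        have hts : t + 1 = s' := hinj (by rw [ht2, h1])
        refine ⟨t, fun x => ?_, Or.inl ⟨ht1, ?_⟩⟩
        · simp only [List.mem_cons]
          constructor
          · rintro (rfl | hx)
            · exact ⟨0, by omega, by simpa using ht1.symm⟩
            · obtain ⟨k, hk, rfl⟩ := (hsupp' x).mp hx
              refine ⟨k + 1, by omega, ?_⟩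
              congr 1
              rw [← hts]; push_cast; ring
          · rintro ⟨k, hk, rfl⟩
            match k, hk with
            | 0, _ => left; simpa using ht1
            | k + 1, hk =>
              right
              refine (hsupp' _).mpr ⟨k, by omega, ?_⟩
              congr 1
              rw [← hts]; push_cast; ring
        · have hcast : t + ((A'.length + 1 : ℕ) : ZMod C.length) = s' + (A'.length : ℕ) := by
            rw [← hts]; push_cast; ring
          rw [hcast]; exact h2
      · -- cg t = c, cg (t+1) = u
        have hts : t = s' := hinj (by rw [ht1, h1])
        subst hts
        rcases Nat.eq_zero_or_pos A'.length with hm0 | hmpos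
        · have hbc : cg C t = w := by
            have h2' := h2; rw [hm0] at h2'; simpa using h2'
          refine ⟨t, fun x => ?_, Or.inr ⟨hbc, by rw [hm0]; simpa using ht2⟩⟩
          · simp only [List.mem_cons, hm0]
            constructor
            · rintro (rfl | hx)
              · exact ⟨1, by omega, by simpa using ht2.symm⟩
              · obtain ⟨k, hk, rfl⟩ := (hsupp' x).mp hx
                rw [hm0] at hk
                exact ⟨k, by omega, rfl⟩
            · rintro ⟨k, hk, rfl⟩
              match k, hk with
              | 0, _ => right; exact (hsupp' _).mpr ⟨0, by omega, rfl⟩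
              | 1, _ => left; simpa using ht2
        · exfalso
          apply hcons.2
          refine (hsupp' u).mpr ⟨1, by omega, ?_⟩
          rw [Nat.cast_one]; exact ht2.symm
    · -- backward : cg s' = w, cg (s' + len) = c
      rcases ht with ⟨ht1, ht2⟩ | ⟨ht1, ht2⟩
      · -- cg t = u, cg (t+1) = c : t + 1 = s' + len
        have hts : t + 1 = s' + (A'.length : ℕ) := hinj (by rw [ht2, h2])
        rcases Nat.eq_zero_or_pos A'.length with hm0 | hmpos
        · have hcw : c = w := by
            have h2' := h2; rw [hm0] at h2'; simp only [Nat.cast_zero, add_zero] at h2'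
            rw [← h2', h1]
          have hts' : t + 1 = s' := by rw [hts, hm0]; simp
          refine ⟨t, fun x => ?_, Or.inl ⟨ht1, ?_⟩⟩
          · simp only [List.mem_cons, hm0]
            constructor
            · rintro (rfl | hx)
              · exact ⟨0, by omega, by simpa using ht1.symm⟩
              · obtain ⟨k, hk, rfl⟩ := (hsupp' x).mp hx
                rw [hm0] at hk
                have hk0 : k = 0 := by omega
                subst hk0
                refine ⟨1, by omega, ?_⟩
                congr 1
                rw [← hts']; push_cast; ring
            · rintro ⟨k, hk, rfl⟩
              match k, hk with
              | 0, _ => left; simpa using ht1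
              | 1, _ =>
                right
                refine (hsupp' _).mpr ⟨0, by omega, ?_⟩
                congr 1
                rw [← hts']; push_cast; ring
          · rw [hm0]
            have hcast : t + ((0 + 1 : ℕ) : ZMod C.length) = t + 1 := by push_cast; ring
            rw [hcast, ht2, hcw]
        · exfalso
          apply hcons.2
          obtain ⟨m'', hm''⟩ : ∃ m'', A'.length = m'' + 1 := ⟨A'.length - 1, by omega⟩
          have hcancel : t + 1 = (s' + (m'' : ℕ)) + 1 := by rw [hts, hm'']; push_cast; ring
          have ht' : t = s' + (m'' : ℕ) := add_right_cancel hcancel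
          exact (hsupp' u).mpr ⟨m'', by omega, by rw [← ht']; exact ht1.symm⟩
      · -- cg t = c, cg (t+1) = u : t = s' + len
        have hts : t = s' + (A'.length : ℕ) := hinj (by rw [ht1, h2])
        refine ⟨s', fun x => ?_, Or.inr ⟨h1, ?_⟩⟩
        · simp only [List.mem_cons]
          constructor
          · rintro (rfl | hx)
            · refine ⟨A'.length + 1, le_rfl, ?_⟩
              have hcast : s' + ((A'.length + 1 : ℕ) : ZMod C.length) = t + 1 := by
                rw [hts]; push_cast; ring
              rw [hcast]; exact ht2.symm
            · obtain ⟨k, hk, rfl⟩ := (hsupp' x).mp hx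
              exact ⟨k, by omega, rfl⟩
          · rintro ⟨k, hk, rfl⟩
            by_cases hk' : k ≤ A'.length
            · right; exact (hsupp' _).mpr ⟨k, hk', rfl⟩
            · left
              have hkk : k = A'.length + 1 := by omega
              subst hkk
              have hcast : s' + ((A'.length + 1 : ℕ) : ZMod C.length) = t + 1 := by
                rw [hts]; push_cast; ring
              rw [hcast, ht2]
        · have hcast : s' + ((A'.length + 1 : ℕ) : ZMod C.length) = t + 1 := by
            rw [hts]; push_cast; ring
          rw [hcast, ht2]
end FanK4Aux

namespace FanK4Aux
variable {V : Type*} {G : SimpleGraph V}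

lemma fin4pairs (P : Fin 4 → Fin 4 → Prop)
    (h01 : P 0 1) (h02 : P 0 2) (h03 : P 0 3)
    (h10 : P 1 0) (h12 : P 1 2) (h13 : P 1 3)
    (h20 : P 2 0) (h21 : P 2 1) (h23 : P 2 3)
    (h30 : P 3 0) (h31 : P 3 1) (h32 : P 3 2) :
    ∀ i j, i ≠ j → P i j := by
  intro i j hij
  fin_cases i <;> fin_cases j <;> first | exact absurd rfl hij | assumption

lemma fin4all (Q : Fin 4 → Prop) (h0 : Q 0) (h1 : Q 1) (h2 : Q 2) (h3 : Q 3) :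
    ∀ i, Q i := by
  intro i; fin_cases i <;> assumption

lemma swap23 {a b c d : V} (h : PrescribedK4 G a c b d) : PrescribedK4 G a b c d := by
  obtain ⟨S, hdis, hconn, ha, hb, hc, hd, hadj⟩ := h
  refine ⟨fun i => S (Equiv.swap 1 2 i),
    fun i j hij => hdis _ _ (fun he => hij ((Equiv.swap 1 2).injective he)),
    fun i => hconn _, ?_, ?_, ?_, ?_,
    fun i j hij => hadj _ _ (fun he => hij ((Equiv.swap 1 2).injective he))⟩
  · show a ∈ S (Equiv.swap 1 2 0)
    rw [show Equiv.swap (1 : Fin 4) 2 0 = 0 from by decide]; exact ha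
  · show b ∈ S (Equiv.swap 1 2 1)
    rw [show Equiv.swap (1 : Fin 4) 2 1 = 2 from by decide]; exact hc
  · show c ∈ S (Equiv.swap 1 2 2)
    rw [show Equiv.swap (1 : Fin 4) 2 2 = 1 from by decide]; exact hb
  · show d ∈ S (Equiv.swap 1 2 3)
    rw [show Equiv.swap (1 : Fin 4) 2 3 = 3 from by decide]; exact hd

lemma assemble_ordered (n : ℕ) [NeZero n] (g : ZMod n → V)
    (ginj : Function.Injective g) (gadj : ∀ i, G.Adj (g i) (g (i + 1)))
    (T : Set V) (hTconn : (G.induce T).Connected)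
    (hTg : ∀ x ∈ T, ∀ i, g i ≠ x) (r : V) (hrT : r ∈ T)
    (s1 s2 s3 : ZMod n) (m1 m2 m3 : ℕ)
    (dis12 : ∀ k ≤ m1, ∀ l ≤ m2, s1 + (k : ℕ) ≠ s2 + (l : ℕ))
    (dis13 : ∀ k ≤ m1, ∀ l ≤ m3, s1 + (k : ℕ) ≠ s3 + (l : ℕ))
    (dis23 : ∀ k ≤ m2, ∀ l ≤ m3, s2 + (k : ℕ) ≠ s3 + (l : ℕ))
    (ρ1 ρ2 ρ3 : V)
    (hρ1 : ∃ k ≤ m1, ρ1 = g (s1 + (k : ℕ)))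
    (hρ2 : ∃ k ≤ m2, ρ2 = g (s2 + (k : ℕ)))
    (hρ3 : ∃ k ≤ m3, ρ3 = g (s3 + (k : ℕ)))
    (e1 : ∃ u ∈ T, ∃ k ≤ m1, G.Adj (g (s1 + (k : ℕ))) u)
    (e2 : ∃ u ∈ T, ∃ k ≤ m2, G.Adj (g (s2 + (k : ℕ))) u)
    (e3 : ∃ u ∈ T, ∃ k ≤ m3, G.Adj (g (s3 + (k : ℕ))) u)
    (hord : (s2 - s1).val ≤ (s3 - s1).val) :
    PrescribedK4 G ρ1 ρ2 ρ3 r := by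
  set d2 := (s2 - s1).val with hd2
  set d3 := (s3 - s1).val with hd3
  have hs2 : s1 + ((d2 : ℕ) : ZMod n) = s2 := by
    rw [hd2, ZMod.natCast_rightInverse (s2 - s1)]; ring
  have hs3 : s1 + ((d3 : ℕ) : ZMod n) = s3 := by
    rw [hd3, ZMod.natCast_rightInverse (s3 - s1)]; ring
  have hd2n : d2 < n := ZMod.val_lt _
  have hd3n : d3 < n := ZMod.val_lt _
  have hstep : ∀ (i : ZMod n) (a : ℕ), i + ((a : ℕ) : ZMod n) + 1 = i + ((a + 1 : ℕ) : ZMod n) := by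
    intro i a; push_cast; ring
  have hshift : ∀ (a b : ℕ), s1 + ((a : ℕ) : ZMod n) + ((b : ℕ) : ZMod n)
      = s1 + ((a + b : ℕ) : ZMod n) := by
    intro a b; push_cast; ring
  -- basic ordering facts
  have hne : s2 ≠ s3 := by
    intro he
    have := dis23 0 (Nat.zero_le _) 0 (Nat.zero_le _)
    simp only [Nat.cast_zero, add_zero] at this
    exact this he
  have hlt : d2 < d3 := by
    rcases lt_or_eq_of_le hord with h | h
    · exact h
    · exfalso; apply hne; rw [← hs2, ← hs3, h]
  have hd2pos : 0 < d2 := by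
    rcases Nat.eq_zero_or_pos d2 with h | h
    · exfalso
      have h12 := dis12 0 (Nat.zero_le _) 0 (Nat.zero_le _)
      simp only [Nat.cast_zero, add_zero] at h12
      apply h12
      rw [← hs2, h]; simp
    · exact h
  have hm1 : m1 < d2 := by
    by_contra hcon
    exact dis12 d2 (by omega) 0 (Nat.zero_le _)
      (by rw [hs2]; simp)
  have h2n : d2 + m2 < n := by
    by_contra hcon
    apply dis12 0 (Nat.zero_le _) (n - d2) (by omega)
    rw [← hs2, hshift, show d2 + (n - d2) = n from by omega, ZMod.natCast_self]
    simp
  have h3n : d3 + m3 < n := by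
    by_contra hcon
    apply dis13 0 (Nat.zero_le _) (n - d3) (by omega)
    rw [← hs3, hshift, show d3 + (n - d3) = n from by omega, ZMod.natCast_self]
    simp
  have hm23 : d2 + m2 < d3 := by
    by_contra hcon
    apply dis23 (d3 - d2) (by omega) 0 (Nat.zero_le _)
    rw [← hs2, ← hs3, hshift, show d2 + (d3 - d2) = d3 from by omega]
    simp
  -- index injectivity
  have inj' : ∀ k l : ℕ, k < n → l < n → g (s1 + (k : ℕ)) = g (s1 + (l : ℕ)) → k = l := by
    intro k l hk hl he
    have h1 := add_left_cancel (ginj he)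
    have h2 := congrArg ZMod.val h1
    rwa [ZMod.val_cast_of_lt hk, ZMod.val_cast_of_lt hl] at h2
  -- the three cycle pieces
    -- W lo hi = g-image of [lo, hi)
  set W : ℕ → ℕ → Set V := fun lo hi => {x | ∃ k, lo ≤ k ∧ k < hi ∧ x = g (s1 + (k : ℕ))}
    with hW
  have hWconn : ∀ lo hi : ℕ, lo < hi → (G.induce (W lo hi)).Connected := by
    intro lo hi hlh
    rw [connected_iff]
    constructor
    · rintro ⟨x, hx⟩ ⟨y, hy⟩
      obtain ⟨k, hk1, hk2, hkx⟩ := hx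
      obtain ⟨l, hl1, hl2, hly⟩ := hy
      have hbase : g (s1 + (lo : ℕ)) ∈ W lo hi := ⟨lo, le_rfl, hlh, rfl⟩
      have hmem : ∀ m : ℕ, m ≤ hi - 1 - lo → ∀ j : ℕ, j ≤ m →
          g ((s1 + (lo : ℕ)) + (j : ℕ)) ∈ W lo hi := by
        intro m hm j hj
        exact ⟨lo + j, by omega, by omega, by rw [hshift]⟩
      have r1 : (G.induce (W lo hi)).Reachable ⟨g (s1 + (lo : ℕ)), hbase⟩ ⟨x, ⟨k, hk1, hk2, hkx⟩⟩ := by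
        refine reach_interval g gadj _ (s1 + (lo : ℕ)) (k - lo) (hmem _ (by omega)) _ _ rfl ?_
        show x = g (s1 + (lo : ℕ) + ((k - lo : ℕ) : ZMod n))
        rw [hkx, hshift, show lo + (k - lo) = k from by omega]
      have r2 : (G.induce (W lo hi)).Reachable ⟨g (s1 + (lo : ℕ)), hbase⟩ ⟨y, ⟨l, hl1, hl2, hly⟩⟩ := by
        refine reach_interval g gadj _ (s1 + (lo : ℕ)) (l - lo) (hmem _ (by omega)) _ _ rfl ?_
        show y = g (s1 + (lo : ℕ) + ((l - lo : ℕ) : ZMod n))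
        rw [hly, hshift, show lo + (l - lo) = l from by omega]
      exact r1.symm.trans r2
    · exact ⟨⟨g (s1 + (lo : ℕ)), lo, le_rfl, hlh, rfl⟩⟩
  -- disjointness between pieces
  have hWdisj : ∀ lo hi lo' hi' : ℕ, hi ≤ lo' → hi ≤ n → hi' ≤ n →
      Disjoint (W lo hi) (W lo' hi') := by
    intro lo hi lo' hi' hle hn1 hn2
    rw [Set.disjoint_left]
    rintro x ⟨k, hk1, hk2, rfl⟩ ⟨l, hl1, hl2, heq⟩
    have := inj' k l (by omega) (by omega) heq
    omega
  have hWT : ∀ lo hi : ℕ, Disjoint (W lo hi) T := by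
    intro lo hi
    rw [Set.disjoint_left]
    rintro x ⟨k, hk1, hk2, rfl⟩ hxT
    exact hTg _ hxT _ rfl
  -- membership of the roots
  obtain ⟨k1, hk1, hρ1e⟩ := hρ1
  obtain ⟨k2, hk2, hρ2e⟩ := hρ2
  obtain ⟨k3, hk3, hρ3e⟩ := hρ3
  have hρ1W : ρ1 ∈ W 0 d2 := ⟨k1, Nat.zero_le _, by omega, hρ1e⟩
  have hρ2W : ρ2 ∈ W d2 d3 := ⟨d2 + k2, by omega, by omega, by rw [hρ2e, ← hs2, hshift]⟩
  have hρ3W : ρ3 ∈ W d3 n := ⟨d3 + k3, by omega, by omega, by rw [hρ3e, ← hs3, hshift]⟩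
  -- edges between the pieces
  have e12 : ∃ u ∈ W 0 d2, ∃ v ∈ W d2 d3, G.Adj u v := by
    refine ⟨g (s1 + ((d2 - 1 : ℕ) : ZMod n)), ⟨d2 - 1, Nat.zero_le _, by omega, rfl⟩,
      g (s1 + ((d2 : ℕ) : ZMod n)), ⟨d2, le_rfl, hlt, rfl⟩, ?_⟩
    have := gadj (s1 + ((d2 - 1 : ℕ) : ZMod n))
    rwa [hstep, show d2 - 1 + 1 = d2 from by omega] at this
  have e23 : ∃ u ∈ W d2 d3, ∃ v ∈ W d3 n, G.Adj u v := by
    refine ⟨g (s1 + ((d3 - 1 : ℕ) : ZMod n)), ⟨d3 - 1, by omega, by omega, rfl⟩,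
      g (s1 + ((d3 : ℕ) : ZMod n)), ⟨d3, le_rfl, by omega, rfl⟩, ?_⟩
    have := gadj (s1 + ((d3 - 1 : ℕ) : ZMod n))
    rwa [hstep, show d3 - 1 + 1 = d3 from by omega] at this
  have e31 : ∃ u ∈ W d3 n, ∃ v ∈ W 0 d2, G.Adj u v := by
    have hn1 : 0 < n := by omega
    refine ⟨g (s1 + ((n - 1 : ℕ) : ZMod n)), ⟨n - 1, by omega, by omega, rfl⟩,
      g (s1 + ((0 : ℕ) : ZMod n)), ⟨0, le_rfl, hd2pos, rfl⟩, ?_⟩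
    have := gadj (s1 + ((n - 1 : ℕ) : ZMod n))
    rwa [hstep, show n - 1 + 1 = n from by omega, ZMod.natCast_self,
      show s1 + (0 : ZMod n) = s1 + ((0 : ℕ) : ZMod n) from by simp] at this
  have eT1 : ∃ u ∈ W 0 d2, ∃ v ∈ T, G.Adj u v := by
    obtain ⟨u, huT, k, hk, hadj⟩ := e1
    exact ⟨g (s1 + (k : ℕ)), ⟨k, Nat.zero_le _, by omega, rfl⟩, u, huT, hadj⟩
  have eT2 : ∃ u ∈ W d2 d3, ∃ v ∈ T, G.Adj u v := by
    obtain ⟨u, huT, k, hk, hadj⟩ := e2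
    exact ⟨g (s2 + (k : ℕ)), ⟨d2 + k, by omega, by omega, by rw [← hs2, hshift]⟩, u, huT, hadj⟩
  have eT3 : ∃ u ∈ W d3 n, ∃ v ∈ T, G.Adj u v := by
    obtain ⟨u, huT, k, hk, hadj⟩ := e3
    exact ⟨g (s3 + (k : ℕ)), ⟨d3 + k, by omega, by omega, by rw [← hs3, hshift]⟩, u, huT, hadj⟩
  -- assemble
  refine ⟨![W 0 d2, W d2 d3, W d3 n, T], ?_, ?_, hρ1W, hρ2W, hρ3W, hrT, ?_⟩
  · exact fin4pairs _
      (hWdisj 0 d2 d2 d3 le_rfl (by omega) (by omega))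
      (hWdisj 0 d2 d3 n (by omega) (by omega) le_rfl)
      (hWT 0 d2)
      (hWdisj 0 d2 d2 d3 le_rfl (by omega) (by omega)).symm
      (hWdisj d2 d3 d3 n le_rfl (by omega) le_rfl)
      (hWT d2 d3)
      (hWdisj 0 d2 d3 n (by omega) (by omega) le_rfl).symm
      (hWdisj d2 d3 d3 n le_rfl (by omega) le_rfl).symm
      (hWT d3 n)
      (hWT 0 d2).symm
      (hWT d2 d3).symm
      (hWT d3 n).symm
  · exact fin4all _ (hWconn 0 d2 hd2pos) (hWconn d2 d3 hlt) (hWconn d3 n (by omega)) hTconn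
  · refine fin4pairs _ ?_ ?_ ?_ ?_ ?_ ?_ ?_ ?_ ?_ ?_ ?_ ?_
    · exact e12
    · obtain ⟨u, hu, v, hv, h⟩ := e31; exact ⟨v, hv, u, hu, h.symm⟩
    · exact eT1
    · obtain ⟨u, hu, v, hv, h⟩ := e12; exact ⟨v, hv, u, hu, h.symm⟩
    · exact e23
    · exact eT2
    · exact e31
    · obtain ⟨u, hu, v, hv, h⟩ := e23; exact ⟨v, hv, u, hu, h.symm⟩
    · exact eT3
    · obtain ⟨u, hu, v, hv, h⟩ := eT1; exact ⟨v, hv, u, hu, h.symm⟩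
    · obtain ⟨u, hu, v, hv, h⟩ := eT2; exact ⟨v, hv, u, hu, h.symm⟩
    · obtain ⟨u, hu, v, hv, h⟩ := eT3; exact ⟨v, hv, u, hu, h.symm⟩

lemma assemble (n : ℕ) [NeZero n] (g : ZMod n → V)
    (ginj : Function.Injective g) (gadj : ∀ i, G.Adj (g i) (g (i + 1)))
    (T : Set V) (hTconn : (G.induce T).Connected)
    (hTg : ∀ x ∈ T, ∀ i, g i ≠ x) (r : V) (hrT : r ∈ T)
    (s1 s2 s3 : ZMod n) (m1 m2 m3 : ℕ)
    (dis12 : ∀ k ≤ m1, ∀ l ≤ m2, s1 + (k : ℕ) ≠ s2 + (l : ℕ))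
    (dis13 : ∀ k ≤ m1, ∀ l ≤ m3, s1 + (k : ℕ) ≠ s3 + (l : ℕ))
    (dis23 : ∀ k ≤ m2, ∀ l ≤ m3, s2 + (k : ℕ) ≠ s3 + (l : ℕ))
    (ρ1 ρ2 ρ3 : V)
    (hρ1 : ∃ k ≤ m1, ρ1 = g (s1 + (k : ℕ)))
    (hρ2 : ∃ k ≤ m2, ρ2 = g (s2 + (k : ℕ)))
    (hρ3 : ∃ k ≤ m3, ρ3 = g (s3 + (k : ℕ)))
    (e1 : ∃ u ∈ T, ∃ k ≤ m1, G.Adj (g (s1 + (k : ℕ))) u)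
    (e2 : ∃ u ∈ T, ∃ k ≤ m2, G.Adj (g (s2 + (k : ℕ))) u)
    (e3 : ∃ u ∈ T, ∃ k ≤ m3, G.Adj (g (s3 + (k : ℕ))) u) :
    PrescribedK4 G ρ1 ρ2 ρ3 r := by
  rcases le_total ((s2 - s1).val) ((s3 - s1).val) with h | h
  · exact assemble_ordered n g ginj gadj T hTconn hTg r hrT s1 s2 s3 m1 m2 m3
      dis12 dis13 dis23 ρ1 ρ2 ρ3 hρ1 hρ2 hρ3 e1 e2 e3 h
  · refine swap23 ?_
    exact assemble_ordered n g ginj gadj T hTconn hTg r hrT s1 s3 s2 m1 m3 m2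
      dis13 dis12 (fun k hk l hl he => dis23 l hl k hk he.symm) ρ1 ρ3 ρ2 hρ1 hρ3 hρ2 e1 e3 e2 h

lemma end_not_mem_takeUntil [DecidableEq V] {u v x : V} {p : G.Walk u v} (hp : p.IsPath)
    (hx : x ∈ p.support) (hxv : x ≠ v) :
    v ∉ (p.takeUntil x hx).support := by
  have hnodup := hp.support_nodup
  rw [← p.take_spec hx, Walk.support_append] at hnodup
  have hdisj := List.disjoint_of_nodup_append hnodup
  intro hv
  apply hdisj hv
  have hnil : ¬(p.dropUntil x hx).Nil := Walk.not_nil_of_ne hxv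
  obtain ⟨u', h', q', hq'⟩ := Walk.not_nil_iff.mp hnil
  rw [hq']
  simpa using q'.end_mem_support

end FanK4Aux

/-- Fan to a cycle plus three disjoint rooted arcs gives a rooted `K₄`-minor:
`C` is a cycle, `r ∉ C` is joined to `C` by three paths `P1, P2, P3` pairwise meeting
only in `r` and meeting `C` only in their endpoints `v1, v2, v3`.  If there are three
pairwise disjoint arcs `A1, A2, A3` of `C` (subpaths of `C`), with `vi ∈ Ai`, each
containing a root `ρi` of the root set `R ⊆ V(C) ∪ {r}`, then `G` has a `K₄`-minor
rooted at `ρ1, ρ2, ρ3` and `r`. -/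
theorem fan_three_arcs_rooted_K4 {V : Type*} (G : SimpleGraph V)
    (hG : ThreeConnected G) (x0 r v1 v2 v3 : V)
    (C : G.Walk x0 x0) (hC : C.IsCycle) (hr : r ∉ C.support)
    (hv1 : v1 ∈ C.support) (hv2 : v2 ∈ C.support) (hv3 : v3 ∈ C.support)
    (P1 : G.Walk r v1) (P2 : G.Walk r v2) (P3 : G.Walk r v3)
    (hP1 : P1.IsPath) (hP2 : P2.IsPath) (hP3 : P3.IsPath)
    (hP12 : ∀ x, x ∈ P1.support → x ∈ P2.support → x = r)
    (hP13 : ∀ x, x ∈ P1.support → x ∈ P3.support → x = r)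
    (hP23 : ∀ x, x ∈ P2.support → x ∈ P3.support → x = r)
    (hPC1 : ∀ x ∈ P1.support, x ∈ C.support → x = v1)
    (hPC2 : ∀ x ∈ P2.support, x ∈ C.support → x = v2)
    (hPC3 : ∀ x ∈ P3.support, x ∈ C.support → x = v3)
    (R : Set V) (hRsub : R ⊆ {x | x ∈ C.support} ∪ {r})
    (a1 b1 a2 b2 a3 b3 : V)
    (A1 : G.Walk a1 b1) (A2 : G.Walk a2 b2) (A3 : G.Walk a3 b3)
    (hA1 : A1.IsPath) (hA2 : A2.IsPath) (hA3 : A3.IsPath)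
    (hA1e : A1.edges ⊆ C.edges) (hA2e : A2.edges ⊆ C.edges) (hA3e : A3.edges ⊆ C.edges)
    (hA1s : ∀ x ∈ A1.support, x ∈ C.support)
    (hA2s : ∀ x ∈ A2.support, x ∈ C.support)
    (hA3s : ∀ x ∈ A3.support, x ∈ C.support)
    (hA12 : ∀ x ∈ A1.support, x ∉ A2.support)
    (hA13 : ∀ x ∈ A1.support, x ∉ A3.support)
    (hA23 : ∀ x ∈ A2.support, x ∉ A3.support)
    (hvA1 : v1 ∈ A1.support) (hvA2 : v2 ∈ A2.support) (hvA3 : v3 ∈ A3.support)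
    (ρ1 ρ2 ρ3 : V) (hρ1R : ρ1 ∈ R) (hρ2R : ρ2 ∈ R) (hρ3R : ρ3 ∈ R)
    (hρ1 : ρ1 ∈ A1.support) (hρ2 : ρ2 ∈ A2.support) (hρ3 : ρ3 ∈ A3.support) :
    PrescribedK4 G ρ1 ρ2 ρ3 r := by
  classical
  haveI : NeZero C.length := ⟨by have := hC.three_le_length; omega⟩
  have ginj := FanK4Aux.cg_injective C hC
  have gadj := FanK4Aux.cg_adj C hC
  -- the tree part
  set T : Set V := {x | (x ∈ P1.support ∧ x ≠ v1) ∨ (x ∈ P2.support ∧ x ≠ v2) ∨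
    (x ∈ P3.support ∧ x ≠ v3)} with hTdef
  have hTiff : ∀ x, x ∈ T ↔ ((x ∈ P1.support ∧ x ≠ v1) ∨ (x ∈ P2.support ∧ x ≠ v2) ∨
      (x ∈ P3.support ∧ x ≠ v3)) := fun x => Iff.rfl
  have hrv1 : r ≠ v1 := fun he => hr (by rw [he]; exact hv1)
  have hrv2 : r ≠ v2 := fun he => hr (by rw [he]; exact hv2)
  have hrv3 : r ≠ v3 := fun he => hr (by rw [he]; exact hv3)
  have hrT : r ∈ T := (hTiff r).mpr (Or.inl ⟨P1.start_mem_support, hrv1⟩)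
  have hTg : ∀ x ∈ T, ∀ i, FanK4Aux.cg C i ≠ x := by
    intro x hx i he
    have hxC : x ∈ C.support := he ▸ FanK4Aux.cg_mem_support C hC i
    rcases (hTiff x).mp hx with ⟨hxP, hxv⟩ | ⟨hxP, hxv⟩ | ⟨hxP, hxv⟩
    · exact hxv (hPC1 x hxP hxC)
    · exact hxv (hPC2 x hxP hxC)
    · exact hxv (hPC3 x hxP hxC)
  have hTconn : (G.induce T).Connected := by
    have hreach : ∀ x (hx : x ∈ T), (G.induce T).Reachable ⟨r, hrT⟩ ⟨x, hx⟩ := by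
      intro x hx
      rcases (hTiff x).mp hx with ⟨hxP, hxv⟩ | ⟨hxP, hxv⟩ | ⟨hxP, hxv⟩
      · have hvW := FanK4Aux.end_not_mem_takeUntil hP1 hxP hxv
        refine FanK4Aux.induce_reach (P1.takeUntil x hxP) (fun y hy => ?_) _ _ rfl rfl
        exact (hTiff y).mpr (Or.inl ⟨P1.support_takeUntil_subset hxP hy,
          fun he => hvW (he ▸ hy)⟩)
      · have hvW := FanK4Aux.end_not_mem_takeUntil hP2 hxP hxv
        refine FanK4Aux.induce_reach (P2.takeUntil x hxP) (fun y hy => ?_) _ _ rfl rfl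
        exact (hTiff y).mpr (Or.inr (Or.inl ⟨P2.support_takeUntil_subset hxP hy,
          fun he => hvW (he ▸ hy)⟩))
      · have hvW := FanK4Aux.end_not_mem_takeUntil hP3 hxP hxv
        refine FanK4Aux.induce_reach (P3.takeUntil x hxP) (fun y hy => ?_) _ _ rfl rfl
        exact (hTiff y).mpr (Or.inr (Or.inr ⟨P3.support_takeUntil_subset hxP hy,
          fun he => hvW (he ▸ hy)⟩))
    rw [connected_iff]
    refine ⟨fun x y => ?_, ⟨⟨r, hrT⟩⟩⟩
    obtain ⟨x, hx⟩ := x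
    obtain ⟨y, hy⟩ := y
    exact (hreach x hx).symm.trans (hreach y hy)
  -- the arcs as intervals
  obtain ⟨s1, hs1, -⟩ := FanK4Aux.arc_interval C hC A1 hA1 hA1e (hA1s a1 A1.start_mem_support)
  obtain ⟨s2, hs2, -⟩ := FanK4Aux.arc_interval C hC A2 hA2 hA2e (hA2s a2 A2.start_mem_support)
  obtain ⟨s3, hs3, -⟩ := FanK4Aux.arc_interval C hC A3 hA3 hA3e (hA3s a3 A3.start_mem_support)
  have dis12 : ∀ k ≤ A1.length, ∀ l ≤ A2.length,
      s1 + (k : ℕ) ≠ s2 + (l : ℕ) := by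
    intro k hk l hl he
    exact hA12 _ ((hs1 _).mpr ⟨k, hk, rfl⟩) ((hs2 _).mpr ⟨l, hl, by rw [he]⟩)
  have dis13 : ∀ k ≤ A1.length, ∀ l ≤ A3.length,
      s1 + (k : ℕ) ≠ s3 + (l : ℕ) := by
    intro k hk l hl he
    exact hA13 _ ((hs1 _).mpr ⟨k, hk, rfl⟩) ((hs3 _).mpr ⟨l, hl, by rw [he]⟩)
  have dis23 : ∀ k ≤ A2.length, ∀ l ≤ A3.length,
      s2 + (k : ℕ) ≠ s3 + (l : ℕ) := by
    intro k hk l hl he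
    exact hA23 _ ((hs2 _).mpr ⟨k, hk, rfl⟩) ((hs3 _).mpr ⟨l, hl, by rw [he]⟩)
  -- edges from the tree to the arcs
  have mkEdge : ∀ {v : V} (P : G.Walk r v), P.IsPath → v ≠ r →
      ((∀ x, x ∈ P.support ∧ x ≠ v → x ∈ T)) →
      ∃ u ∈ T, G.Adj v u := by
    intro v P hP hvr hsub
    have hnil : ¬P.reverse.Nil := SimpleGraph.Walk.not_nil_of_ne hvr
    obtain ⟨u, hadj, q, hq⟩ := SimpleGraph.Walk.not_nil_iff.mp hnil
    have hqpath := hP.reverse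
    rw [hq, SimpleGraph.Walk.cons_isPath_iff] at hqpath
    have huP : u ∈ P.support := by
      have hu : u ∈ P.reverse.support := by rw [hq]; simp
      rwa [SimpleGraph.Walk.support_reverse, List.mem_reverse] at hu
    have huv : u ≠ v := fun he => hqpath.2 (he ▸ q.start_mem_support)
    exact ⟨u, hsub u ⟨huP, huv⟩, hadj⟩
  have e1 : ∃ u ∈ T, ∃ k ≤ A1.length, G.Adj (FanK4Aux.cg C (s1 + (k : ℕ))) u := by
    obtain ⟨k, hk, hvk⟩ := (hs1 v1).mp hvA1
    obtain ⟨u, huT, hadj⟩ := mkEdge P1 hP1 hrv1.symm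
      (fun x hx => (hTiff x).mpr (Or.inl hx))
    exact ⟨u, huT, k, hk, by rw [← hvk]; exact hadj⟩
  have e2 : ∃ u ∈ T, ∃ k ≤ A2.length, G.Adj (FanK4Aux.cg C (s2 + (k : ℕ))) u := by
    obtain ⟨k, hk, hvk⟩ := (hs2 v2).mp hvA2
    obtain ⟨u, huT, hadj⟩ := mkEdge P2 hP2 hrv2.symm
      (fun x hx => (hTiff x).mpr (Or.inr (Or.inl hx)))
    exact ⟨u, huT, k, hk, by rw [← hvk]; exact hadj⟩
  have e3 : ∃ u ∈ T, ∃ k ≤ A3.length, G.Adj (FanK4Aux.cg C (s3 + (k : ℕ))) u := by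
    obtain ⟨k, hk, hvk⟩ := (hs3 v3).mp hvA3
    obtain ⟨u, huT, hadj⟩ := mkEdge P3 hP3 hrv3.symm
      (fun x hx => (hTiff x).mpr (Or.inr (Or.inr hx)))
    exact ⟨u, huT, k, hk, by rw [← hvk]; exact hadj⟩
  exact FanK4Aux.assemble C.length (FanK4Aux.cg C) ginj gadj T hTconn hTg r hrT
    s1 s2 s3 A1.length A2.length A3.length dis12 dis13 dis23 ρ1 ρ2 ρ3
    ((hs1 ρ1).mp hρ1) ((hs2 ρ2).mp hρ2) ((hs3 ρ3).mp hρ3) e1 e2 e3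
end

section
/- Absorbing a real edge into a parallel virtual edge is cost-preserving: if e is a real edge of weight w_e and e* is a virtual edge over the same endpoints u, v, then deleting e and replacing w_{e*}(c) by min(w_{e*}(c), w_{e*}(d) + w_e) yields a Virtual Edge Steiner Tree instance with the same optimal cost. -/
attribute [local instance] Classical.propDecidable

open SimpleGraph

/-- An instance of Virtual Edge Steiner Tree: a graph `G` with edge weights `w`,
terminals `T`, and a finite (index) set `EI` of virtual edges, where virtual edge `i`
has endpoints `ep i` and four weights: `wL i` (only the first endpoint covered),
`wR i` (only the second endpoint covered), `wD i` (both covered, edge not used) and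
`wC i` (the virtual edge itself used). -/
structure VEST (V : Type*) (ι : Type*) where
  G : SimpleGraph V
  w : Sym2 V → ℝ
  T : Set V
  EI : Finset ι
  ep : ι → V × V
  wL : ι → ℝ
  wR : ι → ℝ
  wD : ι → ℝ
  wC : ι → ℝ

namespace VEST

variable {V ι : Type*} (I : VEST V ι)

/-- The edges (as unordered pairs) of a candidate solution consisting of real edges
`Sr` and virtual edges `Sv`. -/
def edgesOf (Sr : Finset (Sym2 V)) (Sv : Finset ι) : Set (Sym2 V) :=
  ↑Sr ∪ (fun i => s((I.ep i).1, (I.ep i).2)) '' ↑Sv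

/-- The set of vertices covered by a candidate solution. -/
def covered (Sr : Finset (Sym2 V)) (Sv : Finset ι) : Set V :=
  {x | ∃ e ∈ I.edgesOf Sr Sv, x ∈ e}

/-- A solution: real edges come from `G`, virtual edges from `EI`, the chosen edges
form a tree (acyclic and connected on the covered vertices) which covers all
terminals and at least one endpoint of every virtual edge. -/
def valid (Sr : Finset (Sym2 V)) (Sv : Finset ι) : Prop :=
  ↑Sr ⊆ I.G.edgeSet ∧ Sv ⊆ I.EI ∧ (∀ i ∈ Sv, (I.ep i).1 ≠ (I.ep i).2) ∧
  (SimpleGraph.fromEdgeSet (I.edgesOf Sr Sv)).IsAcyclic ∧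
  (∀ x ∈ I.covered Sr Sv, ∀ y ∈ I.covered Sr Sv,
    (SimpleGraph.fromEdgeSet (I.edgesOf Sr Sv)).Reachable x y) ∧
  I.T ⊆ I.covered Sr Sv ∧
  (∀ i ∈ I.EI, (I.ep i).1 ∈ I.covered Sr Sv ∨ (I.ep i).2 ∈ I.covered Sr Sv)

/-- The cost contributed by virtual edge `i` with respect to a solution. -/
noncomputable def vcost (Sr : Finset (Sym2 V)) (Sv : Finset ι) (i : ι) : ℝ :=
  if i ∈ Sv then I.wC i
  else if (I.ep i).1 ∈ I.covered Sr Sv ∧ (I.ep i).2 ∈ I.covered Sr Sv then I.wD i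
  else if (I.ep i).1 ∈ I.covered Sr Sv then I.wL i
  else I.wR i

/-- The total cost of a solution. -/
noncomputable def cost (Sr : Finset (Sym2 V)) (Sv : Finset ι) : ℝ :=
  (∑ e ∈ Sr, I.w e) + ∑ i ∈ I.EI, I.vcost Sr Sv i

/-- The optimal (minimum) cost of the instance. -/
noncomputable def optCost : ℝ :=
  sInf {c | ∃ Sr Sv, I.valid Sr Sv ∧ c = I.cost Sr Sv}

end VEST

/-- The minimum cost of a Steiner tree for terminals `T` in `G` with edge weights
`w`: the least total weight of an edge set of `G` in which all terminals are pairwise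
connected. -/
noncomputable def steinerCost {V : Type*} (G : SimpleGraph V) (w : Sym2 V → ℝ)
    (T : Set V) : ℝ :=
  sInf {c | ∃ S : Finset (Sym2 V), ↑S ⊆ G.edgeSet ∧
    (∀ t ∈ T, ∀ t' ∈ T, (SimpleGraph.fromEdgeSet ↑S).Reachable t t') ∧
    c = ∑ e ∈ S, w e}

namespace VESTAux

open VEST

variable {V ι : Type*}

lemma vcost_nonneg (I : VEST V ι) (hwL : ∀ i, 0 ≤ I.wL i) (hwR : ∀ i, 0 ≤ I.wR i)
    (hwD : ∀ i, 0 ≤ I.wD i) (hwC : ∀ i, 0 ≤ I.wC i)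
    (Sr : Finset (Sym2 V)) (Sv : Finset ι) (i : ι) :
    0 ≤ I.vcost Sr Sv i := by
  unfold VEST.vcost
  split_ifs
  · exact hwC i
  · exact hwD i
  · exact hwL i
  · exact hwR i

lemma cost_nonneg (I : VEST V ι) (hw : ∀ e, 0 ≤ I.w e)
    (hwL : ∀ i, 0 ≤ I.wL i) (hwR : ∀ i, 0 ≤ I.wR i)
    (hwD : ∀ i, 0 ≤ I.wD i) (hwC : ∀ i, 0 ≤ I.wC i)
    (Sr : Finset (Sym2 V)) (Sv : Finset ι) :
    0 ≤ I.cost Sr Sv :=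
  add_nonneg (Finset.sum_nonneg fun e _ => hw e)
    (Finset.sum_nonneg fun i _ => vcost_nonneg I hwL hwR hwD hwC Sr Sv i)

lemma vcost_congr (I : VEST V ι) {Sr Sr' : Finset (Sym2 V)} {Sv Sv' : Finset ι}
    (hE : I.edgesOf Sr' Sv' = I.edgesOf Sr Sv) (i : ι) (hi : i ∈ Sv' ↔ i ∈ Sv) :
    I.vcost Sr' Sv' i = I.vcost Sr Sv i := by
  have hcov : I.covered Sr' Sv' = I.covered Sr Sv := by
    unfold VEST.covered; rw [hE]
  by_cases h : i ∈ Sv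
  · unfold VEST.vcost; rw [if_pos (hi.mpr h), if_pos h]
  · unfold VEST.vcost; rw [if_neg (fun hh => h (hi.mp hh)), if_neg h, hcov]

lemma edgesOf_swapA [DecidableEq ι] (I : VEST V ι) {u v : V} {i0 : ι}
    (hep : I.ep i0 = (u, v))
    {Sr : Finset (Sym2 V)} (Sv : Finset ι) (he : s(u, v) ∈ Sr) :
    I.edgesOf (Sr.erase s(u, v)) (insert i0 Sv) = I.edgesOf Sr Sv := by
  unfold VEST.edgesOf
  ext x
  simp only [Set.mem_union, Set.mem_image, Finset.mem_coe, Finset.mem_erase,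
    Finset.mem_insert]
  by_cases hx : x = s(u, v)
  · subst hx
    constructor
    · intro _; exact Or.inl he
    · intro _; exact Or.inr ⟨i0, Or.inl rfl, by simp [hep]⟩
  · constructor
    · rintro (⟨-, h⟩ | ⟨i, (rfl | hiSv), rfl⟩)
      · exact Or.inl h
      · exact absurd (by simp [hep]) hx
      · exact Or.inr ⟨i, hiSv, rfl⟩
    · rintro (h | ⟨i, hiSv, rfl⟩)
      · exact Or.inl ⟨hx, h⟩
      · exact Or.inr ⟨i, Or.inr hiSv, rfl⟩

lemma edgesOf_swapB [DecidableEq ι] (I : VEST V ι) {u v : V} {i0 : ι}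
    (hep : I.ep i0 = (u, v))
    (Sr : Finset (Sym2 V)) {Sv : Finset ι} (hi : i0 ∈ Sv) :
    I.edgesOf (insert s(u, v) Sr) (Sv.erase i0) = I.edgesOf Sr Sv := by
  unfold VEST.edgesOf
  ext x
  simp only [Set.mem_union, Set.mem_image, Finset.mem_coe, Finset.mem_insert,
    Finset.mem_erase]
  by_cases hx : x = s(u, v)
  · subst hx
    constructor
    · intro _; exact Or.inr ⟨i0, hi, by simp [hep]⟩
    · intro _; exact Or.inl (Or.inl rfl)
  · constructor
    · rintro ((rfl | h) | ⟨i, ⟨-, hiSv⟩, rfl⟩)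
      · exact absurd rfl hx
      · exact Or.inl h
      · exact Or.inr ⟨i, hiSv, rfl⟩
    · rintro (h | ⟨i, hiSv, rfl⟩)
      · exact Or.inl (Or.inr h)
      · refine Or.inr ⟨i, ⟨?_, hiSv⟩, rfl⟩
        rintro rfl
        exact hx (by simp [hep])

lemma edgesOf_eraseDup (I : VEST V ι) {u v : V} {i0 : ι} (hep : I.ep i0 = (u, v))
    (Sr : Finset (Sym2 V)) {Sv : Finset ι} (hi : i0 ∈ Sv) :
    I.edgesOf (Sr.erase s(u, v)) Sv = I.edgesOf Sr Sv := by
  unfold VEST.edgesOf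
  ext x
  simp only [Set.mem_union, Set.mem_image, Finset.mem_coe, Finset.mem_erase]
  by_cases hx : x = s(u, v)
  · subst hx
    constructor
    · intro _; exact Or.inr ⟨i0, hi, by simp [hep]⟩
    · intro _; exact Or.inr ⟨i0, hi, by simp [hep]⟩
  · constructor
    · rintro (⟨-, h⟩ | h)
      · exact Or.inl h
      · exact Or.inr h
    · rintro (h | h)
      · exact Or.inl ⟨hx, h⟩
      · exact Or.inr h

lemma absorb_aux [DecidableEq ι]
    (I J : VEST V ι) (hw : ∀ e, 0 ≤ I.w e)
    (hwL : ∀ i, 0 ≤ I.wL i) (hwR : ∀ i, 0 ≤ I.wR i)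
    (hwD : ∀ i, 0 ≤ I.wD i) (hwC : ∀ i, 0 ≤ I.wC i)
    (u v : V) (i0 : ι) (h0 : i0 ∈ I.EI) (hep : I.ep i0 = (u, v))
    (he : s(u, v) ∈ I.G.edgeSet)
    (hG : J.G = I.G.deleteEdges {s(u, v)}) (hw' : J.w = I.w) (hT : J.T = I.T)
    (hEI : J.EI = I.EI) (hepJ : J.ep = I.ep) (hL : J.wL = I.wL) (hR : J.wR = I.wR)
    (hD : J.wD = I.wD)
    (hC : J.wC = Function.update I.wC i0 (min (I.wC i0) (I.wD i0 + I.w s(u, v)))) :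
    J.optCost = I.optCost := by
  have huv : u ≠ v := by
    have h := he
    rw [SimpleGraph.mem_edgeSet] at h
    exact h.ne
  have hep1 : (I.ep i0).1 = u := by rw [hep]
  have hep2 : (I.ep i0).2 = v := by rw [hep]
  have hJES : J.G.edgeSet = I.G.edgeSet \ {s(u, v)} := by
    rw [hG]; exact SimpleGraph.edgeSet_deleteEdges _
  have hJedges : ∀ Sr Sv, J.edgesOf Sr Sv = I.edgesOf Sr Sv := by
    intro Sr Sv; unfold VEST.edgesOf; rw [hepJ]
  have hJcov : ∀ Sr Sv, J.covered Sr Sv = I.covered Sr Sv := by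
    intro Sr Sv; unfold VEST.covered; rw [hJedges]
  have hJwCne : ∀ i, i ≠ i0 → J.wC i = I.wC i := by
    intro i hi; rw [hC]; exact Function.update_of_ne hi _ _
  have hJwC0 : J.wC i0 = min (I.wC i0) (I.wD i0 + I.w s(u, v)) := by
    rw [hC]; exact Function.update_self _ _ _
  have hJwC : ∀ i, 0 ≤ J.wC i := by
    intro i
    by_cases hi : i = i0
    · rw [hi, hJwC0]
      exact le_min (hwC i0) (add_nonneg (hwD i0) (hw _))
    · rw [hJwCne i hi]; exact hwC i
  have hJcost : ∀ Sr Sv, J.cost Sr Sv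
      = (∑ e ∈ Sr, I.w e) + ∑ i ∈ I.EI, J.vcost Sr Sv i := by
    intro Sr Sv; unfold VEST.cost; rw [hw', hEI]
  -- vcost of J equals vcost of I away from i0
  have hvc : ∀ Sr Sv i, i ≠ i0 → J.vcost Sr Sv i = I.vcost Sr Sv i := by
    intro Sr Sv i hne
    unfold VEST.vcost
    rw [hJwCne i hne, hepJ, hJcov, hD, hL, hR]
  -- vcost of J equals vcost of I when the virtual edge is unused
  have hvcNot : ∀ Sr Sv i, i ∉ Sv → J.vcost Sr Sv i = I.vcost Sr Sv i := by
    intro Sr Sv i hni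
    unfold VEST.vcost
    rw [if_neg hni, if_neg hni, hepJ, hJcov, hD, hL, hR]
  -- vcost of J is at most vcost of I everywhere (same solution)
  have hvle : ∀ Sr Sv i, J.vcost Sr Sv i ≤ I.vcost Sr Sv i := by
    intro Sr Sv i
    by_cases hne : i = i0
    · rw [hne]
      by_cases hi : i0 ∈ Sv
      · unfold VEST.vcost
        rw [if_pos hi, if_pos hi, hJwC0]
        exact min_le_left _ _
      · exact le_of_eq (hvcNot Sr Sv i0 hi)
    · exact le_of_eq (hvc Sr Sv i hne)
  -- u and v are covered whenever s(u,v) is an edge of the solution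
  have hcov_of_edge : ∀ Sr Sv, s(u, v) ∈ I.edgesOf Sr Sv →
      u ∈ I.covered Sr Sv ∧ v ∈ I.covered Sr Sv := by
    intro Sr Sv h
    exact ⟨⟨s(u, v), h, by simp⟩, ⟨s(u, v), h, by simp⟩⟩
  -- transfer of validity from I to J when the edge sets agree
  have validJ : ∀ Sr Sv Sr' Sv', I.valid Sr Sv →
      I.edgesOf Sr' Sv' = I.edgesOf Sr Sv →
      (↑Sr' ⊆ J.G.edgeSet) → Sv' ⊆ I.EI → (∀ i ∈ Sv', (I.ep i).1 ≠ (I.ep i).2) →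
      J.valid Sr' Sv' := by
    intro Sr Sv Sr' Sv' hval hE h1 h2 h3
    obtain ⟨-, -, -, hv4, hv5, hv6, hv7⟩ := hval
    have hcovE : I.covered Sr' Sv' = I.covered Sr Sv := by
      unfold VEST.covered; rw [hE]
    refine ⟨h1, ?_, ?_, ?_, ?_, ?_, ?_⟩
    · rw [hEI]; exact h2
    · rw [hepJ]; exact h3
    · rw [hJedges, hE]; exact hv4
    · rw [hJedges, hJcov, hE, hcovE]; exact hv5
    · rw [hT, hJcov, hcovE]; exact hv6
    · rw [hEI, hepJ, hJcov, hcovE]; exact hv7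
  -- Direction A
  have keyA : ∀ Sr Sv, I.valid Sr Sv →
      ∃ Sr' Sv', J.valid Sr' Sv' ∧ J.cost Sr' Sv' ≤ I.cost Sr Sv := by
    intro Sr Sv hval
    obtain ⟨hv1, hv2, hv3, hv4, hv5, hv6, hv7⟩ := hval
    by_cases hmem : s(u, v) ∈ Sr
    · have hsubErase : ↑(Sr.erase s(u, v)) ⊆ J.G.edgeSet := by
        intro x hx
        have hx' : x ∈ Sr.erase s(u, v) := Finset.mem_coe.mp hx
        rw [hJES]
        exact ⟨hv1 (Finset.mem_coe.mpr (Finset.mem_of_mem_erase hx')),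
          by simpa using (Finset.mem_erase.mp hx').1⟩
      by_cases hi0 : i0 ∈ Sv
      · -- drop the real edge, keep the virtual one: edge set unchanged
        have hE : I.edgesOf (Sr.erase s(u, v)) Sv = I.edgesOf Sr Sv :=
          edgesOf_eraseDup I hep Sr hi0
        refine ⟨Sr.erase s(u, v), Sv,
          validJ Sr Sv _ _ ⟨hv1, hv2, hv3, hv4, hv5, hv6, hv7⟩ hE hsubErase hv2 hv3, ?_⟩
        have h1 : ∀ i, J.vcost (Sr.erase s(u, v)) Sv i ≤ I.vcost Sr Sv i := by
          intro i
          by_cases hne : i = i0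
          · rw [hne]
            calc J.vcost (Sr.erase s(u, v)) Sv i0
                ≤ I.vcost (Sr.erase s(u, v)) Sv i0 := hvle _ _ _
              _ = I.vcost Sr Sv i0 := vcost_congr I hE i0 Iff.rfl
          · rw [hvc _ _ i hne, vcost_congr I hE i Iff.rfl]
        have h2 : (∑ e ∈ Sr.erase s(u, v), I.w e) + I.w s(u, v) = ∑ e ∈ Sr, I.w e :=
          Finset.sum_erase_add _ _ hmem
        have h3 : ∑ i ∈ I.EI, J.vcost (Sr.erase s(u, v)) Sv i
            ≤ ∑ i ∈ I.EI, I.vcost Sr Sv i :=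
          Finset.sum_le_sum fun i _ => h1 i
        have hw0 := hw s(u, v)
        rw [hJcost]
        unfold VEST.cost
        linarith
      · -- swap the real edge for the virtual one
        have hE : I.edgesOf (Sr.erase s(u, v)) (insert i0 Sv) = I.edgesOf Sr Sv :=
          edgesOf_swapA I hep Sv hmem
        refine ⟨Sr.erase s(u, v), insert i0 Sv,
          validJ Sr Sv _ _ ⟨hv1, hv2, hv3, hv4, hv5, hv6, hv7⟩ hE hsubErase
            (Finset.insert_subset h0 hv2) ?_, ?_⟩
        · intro i hi
          rcases Finset.mem_insert.mp hi with rfl | hi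
          · rw [hep1, hep2]; exact huv
          · exact hv3 i hi
        · have hECov := hcov_of_edge Sr Sv (Or.inl (Finset.mem_coe.mpr hmem))
          have h2 : (∑ e ∈ Sr.erase s(u, v), I.w e) + I.w s(u, v) = ∑ e ∈ Sr, I.w e :=
            Finset.sum_erase_add _ _ hmem
          have hsplit1 : (∑ i ∈ I.EI.erase i0, J.vcost (Sr.erase s(u, v)) (insert i0 Sv) i)
              + J.vcost (Sr.erase s(u, v)) (insert i0 Sv) i0
              = ∑ i ∈ I.EI, J.vcost (Sr.erase s(u, v)) (insert i0 Sv) i :=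
            Finset.sum_erase_add _ _ h0
          have hsplit2 : (∑ i ∈ I.EI.erase i0, I.vcost Sr Sv i) + I.vcost Sr Sv i0
              = ∑ i ∈ I.EI, I.vcost Sr Sv i :=
            Finset.sum_erase_add _ _ h0
          have hrest : ∑ i ∈ I.EI.erase i0, J.vcost (Sr.erase s(u, v)) (insert i0 Sv) i
              ≤ ∑ i ∈ I.EI.erase i0, I.vcost Sr Sv i := by
            refine Finset.sum_le_sum fun i hi => ?_
            have hne : i ≠ i0 := (Finset.mem_erase.mp hi).1
            rw [hvc _ _ i hne, vcost_congr I hE i (by simp [Finset.mem_insert, hne])]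
          have hJ0 : J.vcost (Sr.erase s(u, v)) (insert i0 Sv) i0
              ≤ I.wD i0 + I.w s(u, v) := by
            unfold VEST.vcost
            rw [if_pos (Finset.mem_insert_self i0 Sv), hJwC0]
            exact min_le_right _ _
          have hI0 : I.vcost Sr Sv i0 = I.wD i0 := by
            unfold VEST.vcost
            rw [if_neg hi0, if_pos ⟨hep1 ▸ hECov.1, hep2 ▸ hECov.2⟩]
          rw [hJcost]
          unfold VEST.cost
          linarith
    · -- the real edge is not used: keep the solution
      have hsub : ↑Sr ⊆ J.G.edgeSet := by
        intro x hx
        rw [hJES]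
        refine ⟨hv1 hx, ?_⟩
        simp only [Set.mem_singleton_iff]
        rintro rfl
        exact hmem (Finset.mem_coe.mp hx)
      refine ⟨Sr, Sv,
        validJ Sr Sv _ _ ⟨hv1, hv2, hv3, hv4, hv5, hv6, hv7⟩ rfl hsub hv2 hv3, ?_⟩
      rw [hJcost]
      unfold VEST.cost
      exact add_le_add le_rfl (Finset.sum_le_sum fun i _ => hvle Sr Sv i)
  -- Direction B
  have keyB : ∀ Sr Sv, J.valid Sr Sv →
      ∃ Sr' Sv', I.valid Sr' Sv' ∧ I.cost Sr' Sv' ≤ J.cost Sr Sv := by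
    intro Sr Sv hval
    obtain ⟨hv1, hv2, hv3, hv4, hv5, hv6, hv7⟩ := hval
    rw [hEI] at hv2
    rw [hepJ] at hv3
    rw [hJedges] at hv4
    rw [hJedges, hJcov] at hv5
    rw [hT, hJcov] at hv6
    rw [hEI, hepJ, hJcov] at hv7
    rw [hJES] at hv1
    have hv1' : ↑Sr ⊆ I.G.edgeSet := fun x hx => (hv1 hx).1
    have hnotmem : s(u, v) ∉ Sr := by
      intro h
      exact (hv1 (Finset.mem_coe.mpr h)).2 rfl
    by_cases hi0 : i0 ∈ Sv
    · by_cases hcmp : I.wC i0 ≤ I.wD i0 + I.w s(u, v)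
      · -- min is wC i0: keep the solution
        refine ⟨Sr, Sv, ⟨hv1', hv2, hv3, hv4, hv5, hv6, hv7⟩, ?_⟩
        have heq : ∀ i, I.vcost Sr Sv i = J.vcost Sr Sv i := by
          intro i
          by_cases hne : i = i0
          · rw [hne]
            unfold VEST.vcost
            rw [if_pos hi0, if_pos hi0, hJwC0, min_eq_left hcmp]
          · exact (hvc Sr Sv i hne).symm
        rw [hJcost]
        unfold VEST.cost
        exact le_of_eq (by rw [Finset.sum_congr rfl fun i _ => heq i])
      · -- min is wD + w: replace the virtual edge by the real one
        push_neg at hcmp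
        have hE : I.edgesOf (insert s(u, v) Sr) (Sv.erase i0) = I.edgesOf Sr Sv :=
          edgesOf_swapB I hep Sr hi0
        have hcovE : I.covered (insert s(u, v) Sr) (Sv.erase i0) = I.covered Sr Sv := by
          unfold VEST.covered; rw [hE]
        refine ⟨insert s(u, v) Sr, Sv.erase i0, ?_, ?_⟩
        · refine ⟨?_, (Finset.erase_subset _ _).trans hv2,
            fun i hi => hv3 i (Finset.mem_of_mem_erase hi), ?_, ?_, ?_, ?_⟩
          · intro x hx
            rcases Finset.mem_insert.mp (Finset.mem_coe.mp hx) with rfl | hx'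
            · exact he
            · exact hv1' (Finset.mem_coe.mpr hx')
          · rw [hE]; exact hv4
          · rw [hE, hcovE]; exact hv5
          · rw [hcovE]; exact hv6
          · rw [hcovE]; exact hv7
        · have hECov := hcov_of_edge Sr Sv
            (Or.inr ⟨i0, Finset.mem_coe.mpr hi0, by simp [hep]⟩)
          have h2 : ∑ e ∈ insert s(u, v) Sr, I.w e = I.w s(u, v) + ∑ e ∈ Sr, I.w e :=
            Finset.sum_insert hnotmem
          have hsplit1 : (∑ i ∈ I.EI.erase i0, I.vcost (insert s(u, v) Sr) (Sv.erase i0) i)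
              + I.vcost (insert s(u, v) Sr) (Sv.erase i0) i0
              = ∑ i ∈ I.EI, I.vcost (insert s(u, v) Sr) (Sv.erase i0) i :=
            Finset.sum_erase_add _ _ h0
          have hsplit2 : (∑ i ∈ I.EI.erase i0, J.vcost Sr Sv i) + J.vcost Sr Sv i0
              = ∑ i ∈ I.EI, J.vcost Sr Sv i :=
            Finset.sum_erase_add _ _ h0
          have hrest : ∑ i ∈ I.EI.erase i0, I.vcost (insert s(u, v) Sr) (Sv.erase i0) i
              = ∑ i ∈ I.EI.erase i0, J.vcost Sr Sv i := by
            refine Finset.sum_congr rfl fun i hi => ?_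
            have hne : i ≠ i0 := (Finset.mem_erase.mp hi).1
            rw [vcost_congr I hE i (by simp [Finset.mem_erase, hne]), hvc Sr Sv i hne]
          have hI0 : I.vcost (insert s(u, v) Sr) (Sv.erase i0) i0 = I.wD i0 := by
            unfold VEST.vcost
            rw [if_neg (Finset.notMem_erase i0 Sv), hcovE,
              if_pos ⟨hep1 ▸ hECov.1, hep2 ▸ hECov.2⟩]
          have hJ0 : J.vcost Sr Sv i0 = I.wD i0 + I.w s(u, v) := by
            unfold VEST.vcost
            rw [if_pos hi0, hJwC0, min_eq_right hcmp.le]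
          rw [hJcost]
          unfold VEST.cost
          linarith
    · -- the virtual edge is not used: keep the solution
      refine ⟨Sr, Sv, ⟨hv1', hv2, hv3, hv4, hv5, hv6, hv7⟩, ?_⟩
      have heq : ∀ i, I.vcost Sr Sv i = J.vcost Sr Sv i := by
        intro i
        by_cases hne : i = i0
        · rw [hne]
          exact (hvcNot Sr Sv i0 hi0).symm
        · exact (hvc Sr Sv i hne).symm
      rw [hJcost]
      unfold VEST.cost
      exact le_of_eq (by rw [Finset.sum_congr rfl fun i _ => heq i])
  -- Assemble: compare the two infima.
  unfold VEST.optCost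
  set A := {c | ∃ Sr Sv, J.valid Sr Sv ∧ c = J.cost Sr Sv} with hA
  set B := {c | ∃ Sr Sv, I.valid Sr Sv ∧ c = I.cost Sr Sv} with hB
  have hAB : ∀ c ∈ B, ∃ c' ∈ A, c' ≤ c := by
    rintro c ⟨Sr, Sv, hval, rfl⟩
    obtain ⟨Sr', Sv', hv', hle⟩ := keyA Sr Sv hval
    exact ⟨J.cost Sr' Sv', ⟨Sr', Sv', hv', rfl⟩, hle⟩
  have hBA : ∀ c ∈ A, ∃ c' ∈ B, c' ≤ c := by
    rintro c ⟨Sr, Sv, hval, rfl⟩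
    obtain ⟨Sr', Sv', hv', hle⟩ := keyB Sr Sv hval
    exact ⟨I.cost Sr' Sv', ⟨Sr', Sv', hv', rfl⟩, hle⟩
  have hJw : ∀ e, 0 ≤ J.w e := by rw [hw']; exact hw
  have hJwL : ∀ i, 0 ≤ J.wL i := by rw [hL]; exact hwL
  have hJwR : ∀ i, 0 ≤ J.wR i := by rw [hR]; exact hwR
  have hJwD : ∀ i, 0 ≤ J.wD i := by rw [hD]; exact hwD
  have hAbdd : BddBelow A := by
    refine ⟨0, ?_⟩
    rintro c ⟨Sr, Sv, hval, rfl⟩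
    exact cost_nonneg J hJw hJwL hJwR hJwD hJwC Sr Sv
  have hBbdd : BddBelow B := by
    refine ⟨0, ?_⟩
    rintro c ⟨Sr, Sv, hval, rfl⟩
    exact cost_nonneg I hw hwL hwR hwD hwC Sr Sv
  rcases B.eq_empty_or_nonempty with hBe | hBne
  · have hAe : A = ∅ := by
      rw [Set.eq_empty_iff_forall_notMem]
      intro c hc
      obtain ⟨c', hc', -⟩ := hBA c hc
      rw [hBe] at hc'
      exact hc'
    rw [hAe, hBe]
  · have hAne : A.Nonempty := by
      obtain ⟨c, hc⟩ := hBne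
      obtain ⟨c', hc', -⟩ := hAB c hc
      exact ⟨c', hc'⟩
    apply le_antisymm
    · refine le_csInf hBne fun b hb => ?_
      obtain ⟨a, ha, hab⟩ := hAB b hb
      exact le_trans (csInf_le hAbdd ha) hab
    · refine le_csInf hAne fun a ha => ?_
      obtain ⟨b, hb, hba⟩ := hBA a ha
      exact le_trans (csInf_le hBbdd hb) hba

end VESTAux

/-- Absorbing a real edge into a parallel virtual edge is cost-preserving: if
`s(u,v)` is a real edge of `G` of weight `w(s(u,v))` and `i0` is a virtual edge with
endpoints `(u, v)`, then deleting the real edge and replacing `wC i0` by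
`min (wC i0) (wD i0 + w(s(u,v)))` yields an instance with the same optimal cost. -/
theorem absorb_real_edge_into_virtual_edge {V ι : Type*} [Fintype V] [DecidableEq ι]
    (I : VEST V ι) (hw : ∀ e, 0 ≤ I.w e)
    (hwL : ∀ i, 0 ≤ I.wL i) (hwR : ∀ i, 0 ≤ I.wR i)
    (hwD : ∀ i, 0 ≤ I.wD i) (hwC : ∀ i, 0 ≤ I.wC i)
    (u v : V) (i0 : ι) (h0 : i0 ∈ I.EI) (hep : I.ep i0 = (u, v))
    (he : s(u, v) ∈ I.G.edgeSet) :
    ({ I with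
        G := I.G.deleteEdges {s(u, v)},
        wC := Function.update I.wC i0
          (min (I.wC i0) (I.wD i0 + I.w s(u, v))) } : VEST V ι).optCost
      = I.optCost :=
  VESTAux.absorb_aux I _ hw hwL hwR hwD hwC u v i0 h0 hep he
    rfl rfl rfl rfl rfl rfl rfl rfl rfl
end
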